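/- Let α₁, α₂, α₃ ∈ ℤ define the elliptic curve E : Y² + α₃Y = X³ + α₁X² + α₂X over ℚ with discriminant Δ_E ≠ 0, and let p be a prime dividing neither Δ_E nor α₁α₂α₃. Then for every F ≥ 1, μ{(b,c) ∈ ℤ_p² : v(b) = 0, v(c) = 0, v(α₃ − c) ≥ 1, v(b³ + α₁b² + α₂b − c² − α₃c) ≥ F} = p^{−F−1} · #{(x,y) ∈ 𝔽_p² : x ≠ 0, y = α₃, y² + α₃y = x³ + α₁x² + α₂x}. -/

import Mathlib

open MeasureTheory
open scoped ENNReal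

/-- The Weierstrass curve `Y² + α₃Y = X³ + α₁X² + α₂X` over `ℤ`. -/
def Wcurve (α₁ α₂ α₃ : ℤ) : WeierstrassCurve ℤ :=
  { a₁ := 0, a₂ := α₁, a₃ := α₃, a₄ := α₂, a₆ := 0 }

variable {p : ℕ} [Fact p.Prime]

private lemma card_res (F' : ℕ) (x : ZMod p) :
    Nat.card {b : ZMod (p ^ (F' + 1)) //
      ZMod.castHom (dvd_pow_self p (Nat.succ_ne_zero F')) (ZMod p) b = x} = p ^ F' := by
  have hp : 0 < p := (Fact.out : p.Prime).pos
  haveI : NeZero (p ^ (F' + 1)) := ⟨pow_ne_zero _ hp.ne'⟩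
  haveI : NeZero (p ^ F') := ⟨pow_ne_zero _ hp.ne'⟩
  set ρ := ZMod.castHom (dvd_pow_self p (Nat.succ_ne_zero F')) (ZMod p)
  have hρ : ∀ b : ZMod (p ^ (F' + 1)), ρ b = ((b.val : ℕ) : ZMod p) := by
    intro b
    rw [ZMod.castHom_apply, ← ZMod.natCast_val]
  set f : ZMod (p ^ F') → {b : ZMod (p ^ (F' + 1)) // ρ b = x} := fun t =>
    ⟨((x.val + p * t.val : ℕ) : ZMod (p ^ (F' + 1))), by
      rw [map_natCast]
      push_cast
      simp [ZMod.natCast_self, ZMod.natCast_zmod_val]⟩ with hf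
  have hbij : Function.Bijective f := by
    constructor
    · intro t t' h
      have h2 : ((x.val + p * t.val : ℕ) : ZMod (p ^ (F' + 1)))
          = ((x.val + p * t'.val : ℕ) : ZMod (p ^ (F' + 1))) := congrArg Subtype.val h
      rw [ZMod.natCast_eq_natCast_iff] at h2
      have h3 : p * t.val ≡ p * t'.val [MOD p ^ (F' + 1)] := h2.add_left_cancel' _
      rw [pow_succ'] at h3
      have h4 : t.val ≡ t'.val [MOD p ^ F'] := Nat.ModEq.mul_left_cancel' hp.ne' h3
      have := Nat.ModEq.eq_of_lt_of_lt h4 t.val_lt t'.val_lt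
      exact ZMod.val_injective _ this
    · rintro ⟨b, hb⟩
      have hbx : (b.val : ZMod p) = x := by rw [← hρ b]; exact hb
      have hxv : x.val = b.val % p := by rw [← hbx, ZMod.val_natCast]
      set k := b.val / p with hk
      have hbv : p * k + x.val = b.val := by rw [hxv]; exact Nat.div_add_mod b.val p
      have hklt : k < p ^ F' := by
        rw [hk, Nat.div_lt_iff_lt_mul hp]
        calc b.val < p ^ (F' + 1) := b.val_lt
        _ = p ^ F' * p := pow_succ p F'
      refine ⟨(k : ZMod (p ^ F')), ?_⟩
      apply Subtype.ext
      show ((x.val + p * (k : ZMod (p ^ F')).val : ℕ) : ZMod (p ^ (F' + 1))) = b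
      rw [ZMod.val_cast_of_lt hklt]
      have h5 : x.val + p * k = b.val := by omega
      rw [h5, ZMod.natCast_zmod_val]
  rw [← Nat.card_eq_of_bijective f hbij, Nat.card_zmod]


private lemma isUnit_of_rho_ne_zero {F' : ℕ} (u : ZMod (p ^ (F' + 1)))
    (h : ZMod.castHom (dvd_pow_self p (Nat.succ_ne_zero F')) (ZMod p) u ≠ 0) : IsUnit u := by
  have hp : 0 < p := (Fact.out : p.Prime).pos
  haveI : NeZero (p ^ (F' + 1)) := ⟨pow_ne_zero _ hp.ne'⟩
  have h1 : ((u.val : ℕ) : ZMod p) ≠ 0 := by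
    rwa [ZMod.castHom_apply, ← ZMod.natCast_val] at h
  rw [Ne, ZMod.natCast_eq_zero_iff] at h1
  have h2 : Nat.Coprime u.val (p ^ (F' + 1)) :=
    Nat.Coprime.pow_right _ (((Fact.out : p.Prime).coprime_iff_not_dvd.mpr h1).symm)
  have := (ZMod.isUnit_iff_coprime u.val (p ^ (F' + 1))).mpr h2
  rwa [ZMod.natCast_zmod_val] at this

private lemma surj_on_res (F' : ℕ) (φ : ZMod (p ^ (F' + 1)) → ZMod (p ^ (F' + 1))) (y z : ZMod p)
    (hmap : ∀ c, ZMod.castHom (dvd_pow_self p (Nat.succ_ne_zero F')) (ZMod p) c = y →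
      ZMod.castHom (dvd_pow_self p (Nat.succ_ne_zero F')) (ZMod p) (φ c) = z)
    (hinj : ∀ c c', ZMod.castHom (dvd_pow_self p (Nat.succ_ne_zero F')) (ZMod p) c = y →
      ZMod.castHom (dvd_pow_self p (Nat.succ_ne_zero F')) (ZMod p) c' = y → φ c = φ c' → c = c')
    (t : ZMod (p ^ (F' + 1)))
    (ht : ZMod.castHom (dvd_pow_self p (Nat.succ_ne_zero F')) (ZMod p) t = z) :
    ∃ c, ZMod.castHom (dvd_pow_self p (Nat.succ_ne_zero F')) (ZMod p) c = y ∧ φ c = t := by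
  have hp : 0 < p := (Fact.out : p.Prime).pos
  haveI : NeZero (p ^ (F' + 1)) := ⟨pow_ne_zero _ hp.ne'⟩
  set ρ := ZMod.castHom (dvd_pow_self p (Nat.succ_ne_zero F')) (ZMod p)
  set Φ : {c : ZMod (p ^ (F' + 1)) // ρ c = y} → {t : ZMod (p ^ (F' + 1)) // ρ t = z} :=
    fun c => ⟨φ c.1, hmap c.1 c.2⟩ with hΦ
  have hinj' : Function.Injective Φ := by
    rintro ⟨c, hc⟩ ⟨c', hc'⟩ h
    exact Subtype.ext (hinj c c' hc hc' (congrArg Subtype.val h))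
  have hcard : Fintype.card {c : ZMod (p ^ (F' + 1)) // ρ c = y}
      = Fintype.card {t : ZMod (p ^ (F' + 1)) // ρ t = z} := by
    rw [← Nat.card_eq_fintype_card, ← Nat.card_eq_fintype_card, card_res F' y, card_res F' z]
  have hbij : Function.Bijective Φ :=
    (Fintype.bijective_iff_injective_and_card Φ).mpr ⟨hinj', hcard⟩
  obtain ⟨⟨c, hc⟩, hΦc⟩ := hbij.2 ⟨t, ht⟩
  exact ⟨c, hc, congrArg Subtype.val hΦc⟩

private lemma card_fiber (α₁ α₂ α₃ : ℤ) (F' : ℕ) (x y : ZMod p)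
    (heq : y ^ 2 + (α₃ : ZMod p) * y = x ^ 3 + (α₁ : ZMod p) * x ^ 2 + (α₂ : ZMod p) * x)
    (hns : 2 * y + (α₃ : ZMod p) ≠ 0 ∨
      3 * x ^ 2 + 2 * (α₁ : ZMod p) * x + (α₂ : ZMod p) ≠ 0) :
    Nat.card {bc : ZMod (p ^ (F' + 1)) × ZMod (p ^ (F' + 1)) //
      ZMod.castHom (dvd_pow_self p (Nat.succ_ne_zero F')) (ZMod p) bc.1 = x ∧
      ZMod.castHom (dvd_pow_self p (Nat.succ_ne_zero F')) (ZMod p) bc.2 = y ∧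
      bc.1 ^ 3 + (α₁ : ZMod (p ^ (F' + 1))) * bc.1 ^ 2 + (α₂ : ZMod (p ^ (F' + 1))) * bc.1
        - bc.2 ^ 2 - (α₃ : ZMod (p ^ (F' + 1))) * bc.2 = 0} = p ^ F' := by
  have hp : 0 < p := (Fact.out : p.Prime).pos
  haveI : NeZero (p ^ (F' + 1)) := ⟨pow_ne_zero _ hp.ne'⟩
  set q := p ^ (F' + 1)
  set ρ := ZMod.castHom (dvd_pow_self p (Nat.succ_ne_zero F')) (ZMod p) with hρdef
  -- injectivity of the quadratic on the residue class of y
  have hqinj : ∀ c c' : ZMod q, ρ c = y → ρ c' = y → (2 * y + (α₃ : ZMod p) ≠ 0) →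
      c ^ 2 + (α₃ : ZMod q) * c = c' ^ 2 + (α₃ : ZMod q) * c' → c = c' := by
    intro c c' hc hc' hd h
    have hfac : (c - c') * (c + c' + (α₃ : ZMod q)) = 0 := by linear_combination h
    have hunit : IsUnit (c + c' + (α₃ : ZMod q)) := by
      apply isUnit_of_rho_ne_zero
      rw [map_add, map_add, map_intCast, hc, hc']
      intro h0
      apply hd
      linear_combination h0
    have h0 : c - c' = 0 := (hunit.mul_left_eq_zero).mp hfac
    linear_combination h0
  -- injectivity of the cubic on the residue class of x
  have hcinj : ∀ b b' : ZMod q, ρ b = x → ρ b' = x →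
      (3 * x ^ 2 + 2 * (α₁ : ZMod p) * x + (α₂ : ZMod p) ≠ 0) →
      b ^ 3 + (α₁ : ZMod q) * b ^ 2 + (α₂ : ZMod q) * b
        = b' ^ 3 + (α₁ : ZMod q) * b' ^ 2 + (α₂ : ZMod q) * b' → b = b' := by
    intro b b' hb hb' hd h
    have hfac : (b - b') * (b ^ 2 + b * b' + b' ^ 2 + (α₁ : ZMod q) * (b + b')
        + (α₂ : ZMod q)) = 0 := by linear_combination h
    have hunit : IsUnit (b ^ 2 + b * b' + b' ^ 2 + (α₁ : ZMod q) * (b + b') + (α₂ : ZMod q)) := by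
      apply isUnit_of_rho_ne_zero
      rw [← hρdef]
      simp only [map_add, map_mul, map_pow, map_intCast, hb, hb']
      intro h0
      apply hd
      linear_combination h0
    have h0 : b - b' = 0 := (hunit.mul_left_eq_zero).mp hfac
    linear_combination h0
  rcases hns with hd | hd
  · -- quadratic direction is smooth: project to the first coordinate
    set Φ : {bc : ZMod q × ZMod q // ρ bc.1 = x ∧ ρ bc.2 = y ∧
        bc.1 ^ 3 + (α₁ : ZMod q) * bc.1 ^ 2 + (α₂ : ZMod q) * bc.1
          - bc.2 ^ 2 - (α₃ : ZMod q) * bc.2 = 0} → {b : ZMod q // ρ b = x} :=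
      fun t => ⟨t.1.1, t.2.1⟩ with hΦ
    have hbij : Function.Bijective Φ := by
      constructor
      · rintro ⟨⟨b, c⟩, ⟨hb, hc, he⟩⟩ ⟨⟨b', c'⟩, ⟨hb', hc', he'⟩⟩ h
        have hbb : b = b' := congrArg Subtype.val h
        subst hbb
        have hcc : c ^ 2 + (α₃ : ZMod q) * c = c' ^ 2 + (α₃ : ZMod q) * c' := by
          linear_combination he' - he
        have := hqinj c c' hc hc' hd hcc
        apply Subtype.ext
        show (b, c) = (b, c')
        rw [this]
      · rintro ⟨b, hb⟩
        obtain ⟨c, hc, hφc⟩ := surj_on_res F' (fun c => c ^ 2 + (α₃ : ZMod q) * c) y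
          (y ^ 2 + (α₃ : ZMod p) * y)
          (by intro c hcy
              show ρ (c ^ 2 + (α₃ : ZMod q) * c) = _
              rw [map_add, map_pow, map_mul, map_intCast, hcy])
          (by intro c c' hcy hcy' h; exact hqinj c c' hcy hcy' hd h)
          (b ^ 3 + (α₁ : ZMod q) * b ^ 2 + (α₂ : ZMod q) * b)
          (by rw [map_add, map_add, map_pow, map_mul, map_pow, map_mul, map_intCast,
                map_intCast, hb]
              exact heq.symm)
        refine ⟨⟨(b, c), ⟨hb, hc, ?_⟩⟩, rfl⟩
        linear_combination -hφc
    rw [Nat.card_eq_of_bijective Φ hbij, card_res F' x]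
  · -- cubic direction is smooth: project to the second coordinate
    set Φ : {bc : ZMod q × ZMod q // ρ bc.1 = x ∧ ρ bc.2 = y ∧
        bc.1 ^ 3 + (α₁ : ZMod q) * bc.1 ^ 2 + (α₂ : ZMod q) * bc.1
          - bc.2 ^ 2 - (α₃ : ZMod q) * bc.2 = 0} → {c : ZMod q // ρ c = y} :=
      fun t => ⟨t.1.2, t.2.2.1⟩ with hΦ
    have hbij : Function.Bijective Φ := by
      constructor
      · rintro ⟨⟨b, c⟩, ⟨hb, hc, he⟩⟩ ⟨⟨b', c'⟩, ⟨hb', hc', he'⟩⟩ h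
        have hcc : c = c' := congrArg Subtype.val h
        subst hcc
        have hbb : b ^ 3 + (α₁ : ZMod q) * b ^ 2 + (α₂ : ZMod q) * b
            = b' ^ 3 + (α₁ : ZMod q) * b' ^ 2 + (α₂ : ZMod q) * b' := by
          linear_combination he - he'
        have := hcinj b b' hb hb' hd hbb
        apply Subtype.ext
        show (b, c) = (b', c)
        rw [this]
      · rintro ⟨c, hc⟩
        obtain ⟨b, hb, hφb⟩ := surj_on_res F'
          (fun b => b ^ 3 + (α₁ : ZMod q) * b ^ 2 + (α₂ : ZMod q) * b) x
          (x ^ 3 + (α₁ : ZMod p) * x ^ 2 + (α₂ : ZMod p) * x)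
          (by intro b hbx
              show ρ (b ^ 3 + (α₁ : ZMod q) * b ^ 2 + (α₂ : ZMod q) * b) = _
              rw [map_add, map_add, map_pow, map_mul, map_pow, map_mul, map_intCast,
                map_intCast, hbx])
          (by intro b b' hbx hbx' h; exact hcinj b b' hbx hbx' hd h)
          (c ^ 2 + (α₃ : ZMod q) * c)
          (by rw [map_add, map_pow, map_mul, map_intCast, hc]
              exact heq)
        refine ⟨⟨(b, c), ⟨hb, hc, ?_⟩⟩, rfl⟩
        linear_combination hφb
    rw [Nat.card_eq_of_bijective Φ hbij, card_res F' y]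


private lemma nonsing (α₁ α₂ α₃ : ℤ) (hpΔ : ¬ (p : ℤ) ∣ (Wcurve α₁ α₂ α₃).Δ)
    (x y : ZMod p)
    (heq : y ^ 2 + (α₃ : ZMod p) * y = x ^ 3 + (α₁ : ZMod p) * x ^ 2 + (α₂ : ZMod p) * x) :
    2 * y + (α₃ : ZMod p) ≠ 0 ∨
      3 * x ^ 2 + 2 * (α₁ : ZMod p) * x + (α₂ : ZMod p) ≠ 0 := by
  set W' : WeierstrassCurve (ZMod p) := (Wcurve α₁ α₂ α₃).map (Int.castRingHom (ZMod p))
    with hW'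
  have ha₁ : W'.a₁ = 0 := by simp [hW', WeierstrassCurve.map_a₁, Wcurve]
  have ha₂ : W'.a₂ = (α₁ : ZMod p) := by simp [hW', WeierstrassCurve.map_a₂, Wcurve]
  have ha₃ : W'.a₃ = (α₃ : ZMod p) := by simp [hW', WeierstrassCurve.map_a₃, Wcurve]
  have ha₄ : W'.a₄ = (α₂ : ZMod p) := by simp [hW', WeierstrassCurve.map_a₄, Wcurve]
  have ha₆ : W'.a₆ = 0 := by simp [hW', WeierstrassCurve.map_a₆, Wcurve]
  have hEq : W'.toAffine.Equation x y := by
    rw [WeierstrassCurve.Affine.equation_iff, ha₁, ha₂, ha₃, ha₄, ha₆]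
    linear_combination heq
  have hΔ' : W'.Δ ≠ 0 := by
    rw [hW', WeierstrassCurve.map_Δ]
    intro h0
    exact hpΔ ((ZMod.intCast_zmod_eq_zero_iff_dvd _ p).mp h0)
  have hns := (W'.toAffine.equation_iff_nonsingular_of_Δ_ne_zero hΔ').mp hEq
  rw [WeierstrassCurve.Affine.nonsingular_iff', ha₁, ha₂, ha₃, ha₄] at hns
  rcases hns.2 with h | h
  · right
    intro h0
    apply h
    rw [zero_mul]
    linear_combination -h0
  · left
    intro h0
    apply h
    rw [zero_mul]
    linear_combination h0
private lemma card_T (α₁ α₂ α₃ : ℤ) (hpΔ : ¬ (p : ℤ) ∣ (Wcurve α₁ α₂ α₃).Δ)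
    (hpα : ¬ (p : ℤ) ∣ α₁ * α₂ * α₃) (F' : ℕ) :
    Nat.card {bc : ZMod (p ^ (F' + 1)) × ZMod (p ^ (F' + 1)) //
      ZMod.castHom (dvd_pow_self p (Nat.succ_ne_zero F')) (ZMod p) bc.1 ≠ 0 ∧
      ZMod.castHom (dvd_pow_self p (Nat.succ_ne_zero F')) (ZMod p) bc.2 ≠ 0 ∧
      ZMod.castHom (dvd_pow_self p (Nat.succ_ne_zero F')) (ZMod p) bc.2 = (α₃ : ZMod p) ∧
      bc.1 ^ 3 + (α₁ : ZMod (p ^ (F' + 1))) * bc.1 ^ 2 + (α₂ : ZMod (p ^ (F' + 1))) * bc.1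
        - bc.2 ^ 2 - (α₃ : ZMod (p ^ (F' + 1))) * bc.2 = 0}
    = p ^ F' * Nat.card {xy : ZMod p × ZMod p // xy.1 ≠ 0 ∧ xy.2 = (α₃ : ZMod p) ∧
        xy.2 ^ 2 + (α₃ : ZMod p) * xy.2
          = xy.1 ^ 3 + (α₁ : ZMod p) * xy.1 ^ 2 + (α₂ : ZMod p) * xy.1} := by
  have hp : 0 < p := (Fact.out : p.Prime).pos
  haveI : NeZero (p ^ (F' + 1)) := ⟨pow_ne_zero _ hp.ne'⟩
  have hα₃ : (α₃ : ZMod p) ≠ 0 := by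
    rw [Ne, ZMod.intCast_zmod_eq_zero_iff_dvd]
    intro h
    exact hpα (Dvd.dvd.mul_left h (α₁ * α₂))
  set q := p ^ (F' + 1)
  set ρ := ZMod.castHom (dvd_pow_self p (Nat.succ_ne_zero F')) (ZMod p) with hρdef
  set T := {bc : ZMod q × ZMod q // ρ bc.1 ≠ 0 ∧ ρ bc.2 ≠ 0 ∧ ρ bc.2 = (α₃ : ZMod p) ∧
      bc.1 ^ 3 + (α₁ : ZMod q) * bc.1 ^ 2 + (α₂ : ZMod q) * bc.1
        - bc.2 ^ 2 - (α₃ : ZMod q) * bc.2 = 0} with hT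
  set P := {xy : ZMod p × ZMod p // xy.1 ≠ 0 ∧ xy.2 = (α₃ : ZMod p) ∧
      xy.2 ^ 2 + (α₃ : ZMod p) * xy.2
        = xy.1 ^ 3 + (α₁ : ZMod p) * xy.1 ^ 2 + (α₂ : ZMod p) * xy.1} with hP
  have hmapeq : ∀ t : ZMod q × ZMod q,
      t.1 ^ 3 + (α₁ : ZMod q) * t.1 ^ 2 + (α₂ : ZMod q) * t.1
        - t.2 ^ 2 - (α₃ : ZMod q) * t.2 = 0 →
      (ρ t.2) ^ 2 + (α₃ : ZMod p) * (ρ t.2)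
        = (ρ t.1) ^ 3 + (α₁ : ZMod p) * (ρ t.1) ^ 2 + (α₂ : ZMod p) * (ρ t.1) := by
    intro t h
    have h2 := congrArg ρ h
    simp only [map_add, map_sub, map_mul, map_pow, map_intCast, map_zero] at h2
    linear_combination -h2
  set Φ : T → P := fun t => ⟨(ρ t.1.1, ρ t.1.2), t.2.1, t.2.2.2.1, hmapeq t.1 t.2.2.2.2⟩
    with hΦ
  have key : ∀ pt : P, Nat.card {t : T // Φ t = pt} = p ^ F' := by
    intro pt
    have hΦt : ∀ (t : T), Φ t = pt → ρ t.1.1 = pt.1.1 ∧ ρ t.1.2 = pt.1.2 := by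
      intro t h
      have h2 : (ρ t.1.1, ρ t.1.2) = pt.1 := congrArg Subtype.val h
      exact ⟨congrArg Prod.fst h2, congrArg Prod.snd h2⟩
    set f : {t : T // Φ t = pt} → {bc : ZMod q × ZMod q // ρ bc.1 = pt.1.1 ∧
        ρ bc.2 = pt.1.2 ∧
        bc.1 ^ 3 + (α₁ : ZMod q) * bc.1 ^ 2 + (α₂ : ZMod q) * bc.1
          - bc.2 ^ 2 - (α₃ : ZMod q) * bc.2 = 0} :=
      fun t => ⟨t.1.1, (hΦt t.1 t.2).1, (hΦt t.1 t.2).2, t.1.2.2.2.2⟩ with hfd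
    have hbij : Function.Bijective f := by
      constructor
      · intro t t' h
        have h2 := congrArg Subtype.val h
        exact Subtype.ext (Subtype.ext h2)
      · rintro ⟨bc, h1, h2, h3⟩
        have htT : ρ bc.1 ≠ 0 ∧ ρ bc.2 ≠ 0 ∧ ρ bc.2 = (α₃ : ZMod p) ∧
            bc.1 ^ 3 + (α₁ : ZMod q) * bc.1 ^ 2 + (α₂ : ZMod q) * bc.1
              - bc.2 ^ 2 - (α₃ : ZMod q) * bc.2 = 0 := by
          refine ⟨by rw [h1]; exact pt.2.1, ?_, ?_, h3⟩
          · rw [h2, pt.2.2.1]; exact hα₃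
          · rw [h2]; exact pt.2.2.1
        have hval : Φ ⟨bc, htT⟩ = pt := by
          apply Subtype.ext
          show (ρ bc.1, ρ bc.2) = pt.1
          rw [h1, h2]
        exact ⟨⟨⟨bc, htT⟩, hval⟩, rfl⟩
    rw [Nat.card_eq_of_bijective f hbij]
    exact (card_fiber α₁ α₂ α₃ F' pt.1.1 pt.1.2 pt.2.2.2
      (nonsing α₁ α₂ α₃ hpΔ pt.1.1 pt.1.2 pt.2.2.2))
  calc Nat.card T = Nat.card (Σ pt : P, {t : T // Φ t = pt}) :=
        Nat.card_congr (Equiv.sigmaFiberEquiv Φ).symm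
    _ = ∑ pt : P, Nat.card {t : T // Φ t = pt} := by
        rw [Nat.card_eq_fintype_card, Fintype.card_sigma]
        simp [Nat.card_eq_fintype_card]
    _ = ∑ _pt : P, p ^ F' := by
        exact Finset.sum_congr rfl (fun pt _ => key pt)
    _ = p ^ F' * Nat.card P := by
        rw [Finset.sum_const, Finset.card_univ, ← Nat.card_eq_fintype_card, smul_eq_mul,
          mul_comm]

private lemma pow_dvd_iff (n : ℕ) (x : ℤ_[p]) :
    (p : ℤ_[p]) ^ n ∣ x ↔ PadicInt.toZModPow n x = 0 := by
  rw [← Ideal.mem_span_singleton, ← PadicInt.ker_toZModPow, RingHom.mem_ker]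

private lemma dvd_p_iff (F' : ℕ) (x : ℤ_[p]) :
    (p : ℤ_[p]) ∣ x ↔ ZMod.castHom (dvd_pow_self p (Nat.succ_ne_zero F')) (ZMod p)
      (PadicInt.toZModPow (F' + 1) x) = 0 := by
  have hp : 0 < p := (Fact.out : p.Prime).pos
  haveI : NeZero (p ^ (F' + 1)) := ⟨pow_ne_zero _ hp.ne'⟩
  set ψ := (PadicInt.toZModPow (F' + 1) : ℤ_[p] →+* ZMod (p ^ (F' + 1))) with hψ
  set a := ψ x with ha
  have h1 : ψ ((a.val : ℕ) : ℤ_[p]) = a := by rw [map_natCast, ZMod.natCast_zmod_val]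
  have h2 : (p : ℤ_[p]) ^ (F' + 1) ∣ x - ((a.val : ℕ) : ℤ_[p]) := by
    rw [pow_dvd_iff, map_sub, h1, sub_self]
  have h3 : (p : ℤ_[p]) ∣ x - ((a.val : ℕ) : ℤ_[p]) :=
    dvd_trans (dvd_pow_self _ (Nat.succ_ne_zero F')) h2
  have h4 : (p : ℤ_[p]) ∣ x ↔ (p : ℤ_[p]) ∣ ((a.val : ℕ) : ℤ_[p]) := by
    constructor
    · intro h
      have := h.sub h3
      rwa [sub_sub_cancel] at this
    · intro h
      have := h3.add h
      rwa [sub_add_cancel] at this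
  have h5 : (p : ℤ_[p]) ∣ ((a.val : ℕ) : ℤ_[p]) ↔ (p : ℕ) ∣ a.val := by
    constructor
    · intro h
      have hnorm : ‖((a.val : ℤ) : ℤ_[p])‖ < 1 := by
        rw [show ((a.val : ℤ) : ℤ_[p]) = ((a.val : ℕ) : ℤ_[p]) by push_cast; ring]
        exact (PadicInt.norm_lt_one_iff_dvd _).mpr h
      have := (PadicInt.norm_int_lt_one_iff_dvd _).mp hnorm
      exact_mod_cast this
    · rintro ⟨k, hk⟩
      exact ⟨(k : ℤ_[p]), by rw [hk]; push_cast; ring⟩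
  have h6 : ZMod.castHom (dvd_pow_self p (Nat.succ_ne_zero F')) (ZMod p) a = 0
      ↔ (p : ℕ) ∣ a.val := by
    rw [ZMod.castHom_apply, ← ZMod.natCast_val, ZMod.natCast_eq_zero_iff]
  rw [h4, h5, ← h6]

private lemma measure_pre (F' : ℕ) [MeasurableSpace ℤ_[p]] [BorelSpace ℤ_[p]]
    (μ : MeasureTheory.Measure (ℤ_[p] × ℤ_[p])) [μ.IsAddHaarMeasure] (hμ : μ Set.univ = 1)
    (Tset : Set (ZMod (p ^ (F' + 1)) × ZMod (p ^ (F' + 1)))) :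
    μ ((fun z : ℤ_[p] × ℤ_[p] =>
        (PadicInt.toZModPow (F' + 1) z.1, PadicInt.toZModPow (F' + 1) z.2)) ⁻¹' Tset)
      = Nat.card Tset * (((p : ℝ≥0∞) ^ (F' + 1)) ^ 2)⁻¹ := by
  have hp : 0 < p := (Fact.out : p.Prime).pos
  haveI : NeZero (p ^ (F' + 1)) := ⟨pow_ne_zero _ hp.ne'⟩
  set ψ := (PadicInt.toZModPow (F' + 1) : ℤ_[p] →+* ZMod (p ^ (F' + 1))) with hψ
  set π : ℤ_[p] × ℤ_[p] → ZMod (p ^ (F' + 1)) × ZMod (p ^ (F' + 1)) := fun z => (ψ z.1, ψ z.2) with hπ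
  have hsingle : ∀ a : ZMod (p ^ (F' + 1)), ψ ⁻¹' {a}
      = Metric.closedBall ((a.val : ℕ) : ℤ_[p]) ((p : ℝ) ^ (-((F' + 1 : ℕ) : ℤ))) := by
    intro a
    ext x
    simp only [Set.mem_preimage, Set.mem_singleton_iff, Metric.mem_closedBall, dist_eq_norm]
    rw [PadicInt.norm_le_pow_iff_mem_span_pow, ← PadicInt.ker_toZModPow, RingHom.mem_ker,
      map_sub, map_natCast, ZMod.natCast_zmod_val, sub_eq_zero]
  have hK : ∀ t : ZMod (p ^ (F' + 1)) × ZMod (p ^ (F' + 1)), π ⁻¹' {t} = (ψ ⁻¹' {t.1}) ×ˢ (ψ ⁻¹' {t.2}) := by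
    intro t
    ext z
    simp [hπ, Set.mem_prod, Prod.ext_iff]
  have hmeas : ∀ t : ZMod (p ^ (F' + 1)) × ZMod (p ^ (F' + 1)), MeasurableSet (π ⁻¹' {t}) := by
    intro t
    rw [hK, hsingle, hsingle]
    exact (Metric.isClosed_closedBall.measurableSet).prod (Metric.isClosed_closedBall.measurableSet)
  have htrans : ∀ t : ZMod (p ^ (F' + 1)) × ZMod (p ^ (F' + 1)),
      μ (π ⁻¹' {t}) = μ (π ⁻¹' {((0 : ZMod (p ^ (F' + 1))), (0 : ZMod (p ^ (F' + 1))))}) := by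
    intro t
    have hset : π ⁻¹' {t}
        = (fun z : ℤ_[p] × ℤ_[p] => (-(((t.1.val : ℕ) : ℤ_[p])), -(((t.2.val : ℕ) : ℤ_[p]))) + z)
          ⁻¹' (π ⁻¹' {((0 : ZMod (p ^ (F' + 1))), (0 : ZMod (p ^ (F' + 1))))}) := by
      ext z
      simp only [Set.mem_preimage, Set.mem_singleton_iff, Prod.ext_iff, hπ, Prod.fst_add,
        Prod.snd_add, map_add, map_neg, map_natCast, ZMod.natCast_zmod_val]
      constructor
      · rintro ⟨h1, h2⟩
        constructor <;> simp [h1, h2]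
      · rintro ⟨h1, h2⟩
        constructor <;> [linear_combination h1; linear_combination h2]
    rw [hset, MeasureTheory.measure_preimage_add]
  have hdisj : Pairwise (Function.onFun Disjoint (fun t : ZMod (p ^ (F' + 1)) × ZMod (p ^ (F' + 1)) => π ⁻¹' {t})) := by
    intro t t' hne
    rw [Function.onFun, Set.disjoint_left]
    intro z hz hz'
    exact hne ((Set.mem_singleton_iff.mp hz).symm.trans (Set.mem_singleton_iff.mp hz'))
  have hpart : (1 : ℝ≥0∞) = (Fintype.card (ZMod (p ^ (F' + 1)) × ZMod (p ^ (F' + 1))))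
      * μ (π ⁻¹' {((0 : ZMod (p ^ (F' + 1))), (0 : ZMod (p ^ (F' + 1))))}) := by
    have huniv : Set.univ = ⋃ t : ZMod (p ^ (F' + 1)) × ZMod (p ^ (F' + 1)), π ⁻¹' {t} := by
      ext z
      simp only [Set.mem_univ, true_iff, Set.mem_iUnion, Set.mem_preimage,
        Set.mem_singleton_iff]
      exact ⟨π z, rfl⟩
    rw [← hμ, huniv, MeasureTheory.measure_iUnion hdisj hmeas, tsum_fintype]
    rw [Finset.sum_congr rfl (fun t _ => htrans t), Finset.sum_const, Finset.card_univ,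
      nsmul_eq_mul]
  have hcard : ((Fintype.card (ZMod (p ^ (F' + 1)) × ZMod (p ^ (F' + 1))) : ℕ) : ℝ≥0∞)
      = ((p : ℝ≥0∞) ^ (F' + 1)) ^ 2 := by
    rw [Fintype.card_prod, ZMod.card (p ^ (F' + 1))]
    push_cast
    ring
  have hne0 : ((p : ℝ≥0∞) ^ (F' + 1)) ^ 2 ≠ 0 := by
    apply pow_ne_zero; apply pow_ne_zero
    exact_mod_cast hp.ne'
  have hnetop : ((p : ℝ≥0∞) ^ (F' + 1)) ^ 2 ≠ ⊤ := by
    apply ENNReal.pow_ne_top; apply ENNReal.pow_ne_top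
    exact ENNReal.natCast_ne_top p
  have hc0 : μ (π ⁻¹' {((0 : ZMod (p ^ (F' + 1))), (0 : ZMod (p ^ (F' + 1))))}) = (((p : ℝ≥0∞) ^ (F' + 1)) ^ 2)⁻¹ := by
    rw [hcard] at hpart
    rw [← one_mul (μ _), ← ENNReal.inv_mul_cancel hne0 hnetop, mul_assoc, ← hpart, mul_one]
  have hTfin : Tset.Finite := Set.toFinite Tset
  have hSB : π ⁻¹' Tset = ⋃ t ∈ hTfin.toFinset, π ⁻¹' {t} := by
    ext z
    simp only [Set.mem_preimage, Set.mem_iUnion, Set.Finite.mem_toFinset,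
      Set.mem_singleton_iff]
    exact ⟨fun h => ⟨π z, h, rfl⟩, fun ⟨t, ht, h⟩ => h ▸ ht⟩
  rw [hSB, MeasureTheory.measure_biUnion_finset
    (fun t _ t' _ hne => hdisj hne) (fun t _ => hmeas t)]
  rw [Finset.sum_congr rfl (fun t _ => (htrans t).trans hc0), Finset.sum_const, nsmul_eq_mul]
  congr 1
  rw [Nat.card_coe_set_eq, Set.ncard_eq_toFinset_card Tset hTfin]


/-- Let `α₁, α₂, α₃ ∈ ℤ` define the elliptic curve
`E : Y² + α₃Y = X³ + α₁X² + α₂X` over `ℚ` with discriminant `Δ_E ≠ 0`, and let `p` be a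
prime dividing neither `Δ_E` nor `α₁α₂α₃`. Then for every `F ≥ 1`, the normalized Haar
measure of `{(b,c) ∈ ℤ_p² : v(b) = 0, v(c) = 0, v(α₃ − c) ≥ 1,
v(b³ + α₁b² + α₂b − c² − α₃c) ≥ F}` equals `p^{−F−1}` times the number of points
`(x,y) ∈ 𝔽_p²` with `x ≠ 0`, `y = α₃` on the reduction of `E` modulo `p`. -/
theorem stmt_11 (α₁ α₂ α₃ : ℤ) (hΔ : (Wcurve α₁ α₂ α₃).Δ ≠ 0)
    (p : ℕ) [Fact p.Prime] (hpΔ : ¬ (p : ℤ) ∣ (Wcurve α₁ α₂ α₃).Δ)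
    (hpα : ¬ (p : ℤ) ∣ α₁ * α₂ * α₃)
    [MeasurableSpace ℤ_[p]] [BorelSpace ℤ_[p]]
    (μ : Measure (ℤ_[p] × ℤ_[p])) [μ.IsAddHaarMeasure] (hμ : μ Set.univ = 1)
    (F : ℕ) (hF : 1 ≤ F) :
    μ {bc : ℤ_[p] × ℤ_[p] |
        ¬ (p : ℤ_[p]) ∣ bc.1 ∧ ¬ (p : ℤ_[p]) ∣ bc.2 ∧
        (p : ℤ_[p]) ∣ ((α₃ : ℤ_[p]) - bc.2) ∧
        (p : ℤ_[p]) ^ F ∣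
          (bc.1 ^ 3 + (α₁ : ℤ_[p]) * bc.1 ^ 2 + (α₂ : ℤ_[p]) * bc.1
            - bc.2 ^ 2 - (α₃ : ℤ_[p]) * bc.2)}
      = (p : ℝ≥0∞) ^ (-(F : ℤ) - 1) *
        (Nat.card {xy : ZMod p × ZMod p //
          xy.1 ≠ 0 ∧ xy.2 = (α₃ : ZMod p) ∧
          xy.2 ^ 2 + (α₃ : ZMod p) * xy.2
            = xy.1 ^ 3 + (α₁ : ZMod p) * xy.1 ^ 2 + (α₂ : ZMod p) * xy.1} : ℝ≥0∞) := by
  have hp : 0 < p := (Fact.out : p.Prime).pos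
  obtain ⟨F', rfl⟩ : ∃ F', F = F' + 1 := ⟨F - 1, by omega⟩
  haveI : NeZero (p ^ (F' + 1)) := ⟨pow_ne_zero _ hp.ne'⟩
  set ρ := ZMod.castHom (dvd_pow_self p (Nat.succ_ne_zero F')) (ZMod p) with hρdef
  set ψ := (PadicInt.toZModPow (F' + 1) : ℤ_[p] →+* ZMod (p ^ (F' + 1))) with hψdef
  set Tset : Set (ZMod (p ^ (F' + 1)) × ZMod (p ^ (F' + 1))) :=
    {bc | ρ bc.1 ≠ 0 ∧ ρ bc.2 ≠ 0 ∧ ρ bc.2 = (α₃ : ZMod p) ∧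
      bc.1 ^ 3 + (α₁ : ZMod (p ^ (F' + 1))) * bc.1 ^ 2 + (α₂ : ZMod (p ^ (F' + 1))) * bc.1
        - bc.2 ^ 2 - (α₃ : ZMod (p ^ (F' + 1))) * bc.2 = 0} with hTset
  have hSeq : {bc : ℤ_[p] × ℤ_[p] |
        ¬ (p : ℤ_[p]) ∣ bc.1 ∧ ¬ (p : ℤ_[p]) ∣ bc.2 ∧
        (p : ℤ_[p]) ∣ ((α₃ : ℤ_[p]) - bc.2) ∧
        (p : ℤ_[p]) ^ (F' + 1) ∣
          (bc.1 ^ 3 + (α₁ : ℤ_[p]) * bc.1 ^ 2 + (α₂ : ℤ_[p]) * bc.1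
            - bc.2 ^ 2 - (α₃ : ℤ_[p]) * bc.2)}
      = (fun z : ℤ_[p] × ℤ_[p] => (ψ z.1, ψ z.2)) ⁻¹' Tset := by
    ext z
    simp only [Set.mem_setOf_eq, Set.mem_preimage, hTset]
    apply and_congr
    · exact not_congr (dvd_p_iff F' z.1)
    apply and_congr
    · exact not_congr (dvd_p_iff F' z.2)
    apply and_congr
    · rw [dvd_p_iff F' ((α₃ : ℤ_[p]) - z.2)]
      rw [map_sub, map_intCast, map_sub, map_intCast, sub_eq_zero, eq_comm]
    · rw [pow_dvd_iff (F' + 1)]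
      constructor
      · intro h
        have h2 : ψ (z.1 ^ 3 + (α₁ : ℤ_[p]) * z.1 ^ 2 + (α₂ : ℤ_[p]) * z.1
            - z.2 ^ 2 - (α₃ : ℤ_[p]) * z.2) = 0 := h
        simp only [map_sub, map_add, map_mul, map_pow, map_intCast] at h2
        exact h2
      · intro h
        show ψ _ = 0
        simp only [map_sub, map_add, map_mul, map_pow, map_intCast]
        exact h
  rw [hSeq, measure_pre F' μ hμ Tset]
  have hcount : Nat.card Tset = p ^ F' *
      Nat.card {xy : ZMod p × ZMod p // xy.1 ≠ 0 ∧ xy.2 = (α₃ : ZMod p) ∧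
        xy.2 ^ 2 + (α₃ : ZMod p) * xy.2
          = xy.1 ^ 3 + (α₁ : ZMod p) * xy.1 ^ 2 + (α₂ : ZMod p) * xy.1} :=
    card_T α₁ α₂ α₃ hpΔ hpα F'
  rw [hcount]
  -- arithmetic in ℝ≥0∞
  set N := Nat.card {xy : ZMod p × ZMod p // xy.1 ≠ 0 ∧ xy.2 = (α₃ : ZMod p) ∧
      xy.2 ^ 2 + (α₃ : ZMod p) * xy.2
        = xy.1 ^ 3 + (α₁ : ZMod p) * xy.1 ^ 2 + (α₂ : ZMod p) * xy.1} with hN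
  have hx0 : (p : ℝ≥0∞) ≠ 0 := by exact_mod_cast hp.ne'
  have hxt : (p : ℝ≥0∞) ≠ ⊤ := ENNReal.natCast_ne_top p
  have h1 : (((p : ℝ≥0∞) ^ (F' + 1)) ^ 2)⁻¹ = (p : ℝ≥0∞) ^ (-(2 * F' + 2 : ℕ) : ℤ) := by
    rw [ENNReal.zpow_neg, zpow_natCast, ← pow_mul]
    congr 2
    ring
  have h2 : ((p ^ F' : ℕ) : ℝ≥0∞) = (p : ℝ≥0∞) ^ ((F' : ℕ) : ℤ) := by
    rw [zpow_natCast]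
    push_cast
    ring
  rw [Nat.cast_mul, h1, h2, mul_comm ((p : ℝ≥0∞) ^ ((F' : ℕ) : ℤ)) (N : ℝ≥0∞), mul_assoc,
    ← ENNReal.zpow_add hx0 hxt]
  rw [show ((F' : ℕ) : ℤ) + -(2 * F' + 2 : ℕ) = -((F' : ℕ) + 1 : ℤ) - 1 by push_cast; ring]
  rw [mul_comm]
  congr 2
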